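/- arXiv:2505.08908 — 11 statements merged into one kernel-verified Lean document; each statement's English description precedes it below -/
import Mathlib

section
/- Under strong ignorability without covariates, the joint distribution of the evaluated decision and each single potential outcome is identified from observables: for every d, k ∈ Fin K and m ∈ Fin M, π(D* = d, Y(k) = m) = π(D* = d, Y(D) = m, D = k) / π(D = k). -/
/-- Under strong ignorability without covariates, the joint distribution of the
evaluated decision `D*` and each single potential outcome `Y(k)` is identified from observables:
`π(D* = d, Y(k) = m) = π(D* = d, Y(D) = m, D = k) / π(D = k)`.

The pmf `π` is on `(Fin K) × (Fin K) × (Fin K → Fin M)`, with coordinates interpreted as the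
observed decision `D`, the evaluated decision `D*`, and the potential-outcome vector `Y(·)`. -/
theorem stmt_0 (K M : ℕ) (hK : 2 ≤ K) (hM : 2 ≤ M)
    (π : Fin K × Fin K × (Fin K → Fin M) → ℝ)
    (hnn : ∀ z, 0 ≤ π z)
    (hsum : ∑ z, π z = 1)
    -- strong ignorability (independence of D from (D*, Y(·))):
    (hindep : ∀ (k d : Fin K) (y : Fin K → Fin M),
      π (k, d, y) =
        (∑ d' : Fin K, ∑ y' : Fin K → Fin M, π (k, d', y')) *
          (∑ k' : Fin K, π (k', d, y)))
    -- overlap: positive probability of every observed decision: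
    (hpos : ∀ k : Fin K, 0 < ∑ d' : Fin K, ∑ y' : Fin K → Fin M, π (k, d', y')) :
    ∀ (d k : Fin K) (m : Fin M),
      (∑ d' : Fin K,
          ∑ y ∈ Finset.univ.filter (fun y : Fin K → Fin M => y k = m), π (d', d, y)) =
        (∑ y ∈ Finset.univ.filter (fun y : Fin K → Fin M => y k = m), π (k, d, y)) /
          (∑ d' : Fin K, ∑ y' : Fin K → Fin M, π (k, d', y')) := by
  intro d k m
  have hp := hpos k
  rw [eq_div_iff (ne_of_gt hp)]
  have hnum : (∑ y ∈ Finset.univ.filter (fun y : Fin K → Fin M => y k = m), π (k, d, y))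
      = (∑ d' : Fin K, ∑ y' : Fin K → Fin M, π (k, d', y')) *
        ∑ y ∈ Finset.univ.filter (fun y : Fin K → Fin M => y k = m),
          ∑ k' : Fin K, π (k', d, y) := by
    rw [Finset.mul_sum]
    exact Finset.sum_congr rfl fun y _ => hindep k d y
  rw [hnum, mul_comm]
  congr 1
  rw [Finset.sum_comm]
end

section
/- (Theorem 1, no-covariate version.) Suppose the counterfactual loss ℓ is additive with weights ω and intercept ϖ, and let π satisfy strong ignorability without covariates. Then the counterfactual risk of the evaluated decision decomposes as R = Σ over d, k ∈ Fin K and m ∈ Fin M of ω k d m · π(D* = d, Y(D) = m, D = k)/π(D = k) + C, where R = Σ over (d, y) of ℓ d y · π(D* = d, Y(·) = y) and C = Σ over potential-outcome vectors y of ϖ(y) · π(Y(·) = y). In particular, the first summand is a function of the observable joint law of (D*, Y(D), D) alone, and C does not depend on the distribution of D*. -/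
/-- Theorem 1, no-covariate version: if the counterfactual loss `ℓ` is additive
with weights `ω` and intercept `ϖ`, and `π` satisfies strong ignorability without covariates,
then the counterfactual risk of the evaluated decision decomposes as
`R = Σ_{d,k,m} ω k d m · π(D* = d, Y(D) = m, D = k)/π(D = k) + C`, where
`R = Σ_{(d,y)} ℓ d y · π(D* = d, Y(·) = y)` and `C = Σ_y ϖ(y) · π(Y(·) = y)`.

The pmf `π` is on `(Fin K) × (Fin K) × (Fin K → Fin M)`, with coordinates interpreted as the
observed decision `D`, the evaluated decision `D*`, and the potential-outcome vector `Y(·)`. -/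
theorem stmt_1 (K M : ℕ) (hK : 2 ≤ K) (hM : 2 ≤ M)
    (π : Fin K × Fin K × (Fin K → Fin M) → ℝ)
    (hnn : ∀ z, 0 ≤ π z)
    (hsum : ∑ z, π z = 1)
    -- strong ignorability (independence of D from (D*, Y(·))):
    (hindep : ∀ (k d : Fin K) (y : Fin K → Fin M),
      π (k, d, y) =
        (∑ d' : Fin K, ∑ y' : Fin K → Fin M, π (k, d', y')) *
          (∑ k' : Fin K, π (k', d, y)))
    -- overlap: positive probability of every observed decision:
    (hpos : ∀ k : Fin K, 0 < ∑ d' : Fin K, ∑ y' : Fin K → Fin M, π (k, d', y'))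
    -- additive counterfactual loss:
    (ℓ : Fin K → (Fin K → Fin M) → ℝ)
    (ω : Fin K → Fin K → Fin M → ℝ)
    (ϖ : (Fin K → Fin M) → ℝ)
    (hadd : ∀ (d : Fin K) (y : Fin K → Fin M), ℓ d y = (∑ k : Fin K, ω k d (y k)) + ϖ y) :
    -- counterfactual risk R = Σ_{(d,y)} ℓ d y · π(D* = d, Y(·) = y)
    (∑ d : Fin K, ∑ y : Fin K → Fin M, ℓ d y * (∑ k : Fin K, π (k, d, y))) =
      (∑ d : Fin K, ∑ k : Fin K, ∑ m : Fin M,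
        ω k d m *
          ((∑ y ∈ Finset.univ.filter (fun y : Fin K → Fin M => y k = m), π (k, d, y)) /
            (∑ d' : Fin K, ∑ y' : Fin K → Fin M, π (k, d', y')))) +
      -- C = Σ_y ϖ(y) · π(Y(·) = y)
      (∑ y : Fin K → Fin M, ϖ y * (∑ k : Fin K, ∑ d : Fin K, π (k, d, y))) := by
  classical
  set p : Fin K → ℝ := fun k => ∑ d' : Fin K, ∑ y' : Fin K → Fin M, π (k, d', y') with hp
  set q : Fin K → (Fin K → Fin M) → ℝ := fun d y => ∑ k' : Fin K, π (k', d, y) with hq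
  have hfac : ∀ k d y, π (k, d, y) = p k * q d y := hindep
  have hdiv : ∀ (k d : Fin K) (m : Fin M),
      (∑ y ∈ Finset.univ.filter (fun y : Fin K → Fin M => y k = m), π (k, d, y)) / p k
        = ∑ y ∈ Finset.univ.filter (fun y : Fin K → Fin M => y k = m), q d y := by
    intro k d m
    have hne : p k ≠ 0 := ne_of_gt (hpos k)
    have h1 : (∑ y ∈ Finset.univ.filter (fun y : Fin K → Fin M => y k = m), π (k, d, y))
        = p k * ∑ y ∈ Finset.univ.filter (fun y : Fin K → Fin M => y k = m), q d y := by
      rw [Finset.mul_sum]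
      exact Finset.sum_congr rfl fun y _ => hfac k d y
    rw [h1, mul_div_cancel_left₀ _ hne]
  have hRfirst : ∀ d k : Fin K,
      (∑ m : Fin M, ω k d m * ∑ y ∈ Finset.univ.filter (fun y : Fin K → Fin M => y k = m), q d y)
        = ∑ y : Fin K → Fin M, ω k d (y k) * q d y := by
    intro d k
    rw [← Finset.sum_fiberwise (Finset.univ) (fun y : Fin K → Fin M => y k)
        (fun y => ω k d (y k) * q d y)]
    refine Finset.sum_congr rfl fun m _ => ?_
    rw [Finset.mul_sum]
    refine Finset.sum_congr rfl fun y hy => ?_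
    simp only [Finset.mem_filter] at hy
    rw [hy.2]
  calc ∑ d : Fin K, ∑ y : Fin K → Fin M, ℓ d y * (∑ k : Fin K, π (k, d, y))
      = ∑ d : Fin K, ∑ y : Fin K → Fin M,
          ((∑ k : Fin K, ω k d (y k) * q d y) + ϖ y * q d y) := by
        refine Finset.sum_congr rfl fun d _ => Finset.sum_congr rfl fun y _ => ?_
        rw [hadd, add_mul, Finset.sum_mul]
    _ = (∑ d : Fin K, ∑ y : Fin K → Fin M, ∑ k : Fin K, ω k d (y k) * q d y)
          + (∑ d : Fin K, ∑ y : Fin K → Fin M, ϖ y * q d y) := by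
        rw [← Finset.sum_add_distrib]
        exact Finset.sum_congr rfl fun d _ => Finset.sum_add_distrib
    _ = (∑ d : Fin K, ∑ k : Fin K, ∑ m : Fin M,
        ω k d m *
          ((∑ y ∈ Finset.univ.filter (fun y : Fin K → Fin M => y k = m), π (k, d, y)) / p k)) +
      (∑ y : Fin K → Fin M, ϖ y * (∑ k : Fin K, ∑ d : Fin K, π (k, d, y))) := by
        congr 1
        · refine Finset.sum_congr rfl fun d _ => ?_
          rw [Finset.sum_comm]
          refine Finset.sum_congr rfl fun k _ => ?_
          rw [← hRfirst d k]
          exact Finset.sum_congr rfl fun m _ => by rw [hdiv]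
        · rw [Finset.sum_comm]
          refine Finset.sum_congr rfl fun y _ => ?_
          rw [← Finset.mul_sum]
          congr 1
          rw [Finset.sum_comm]
end

section
/- (Corollary: counterfactual risk under the additive loss with covariates.) Let 𝒳 be a finite type of covariate values, and let π be a pmf on 𝒳 × (Fin K) × (Fin K) × (Fin K → Fin M), interpreted as the joint law of (X, D, D*, Y(·)), satisfying: for every x with π(X = x) > 0, conditionally on X = x the coordinate D is independent of (D*, Y(·)) and π(D = k | X = x) > 0 for all k. Suppose the counterfactual loss is additive with covariate-dependent weights ω : 𝒳 → Fin K → Fin K → Fin M → ℝ and intercept ϖ : 𝒳 → (Fin K → Fin M) → ℝ. Then the counterfactual risk E[ℓ(X, D*, Y(·))] equals Σ over x with π(X = x) > 0, d, k ∈ Fin K, m ∈ Fin M of ω x k d m · π(D* = d, Y(D) = m | D = k, X = x) · π(X = x) + E[C(X)], where C(x) = Σ over potential-outcome vectors y of ϖ x y · π(Y(·) = y | X = x). -/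
open Finset

/-- Marginal probability of the covariate value `x` under the joint pmf `π` of
`(X, D, D*, Y(·))`. -/
def margX (K M : ℕ) (𝒳 : Type) [Fintype 𝒳]
    (π : 𝒳 × Fin K × Fin K × (Fin K → Fin M) → ℝ) (x : 𝒳) : ℝ :=
  ∑ k : Fin K, ∑ d : Fin K, ∑ y : Fin K → Fin M, π (x, k, d, y)

/-- Joint probability `π(D = k, X = x)`. -/
def margDX (K M : ℕ) (𝒳 : Type) [Fintype 𝒳]
    (π : 𝒳 × Fin K × Fin K × (Fin K → Fin M) → ℝ) (x : 𝒳) (k : Fin K) : ℝ :=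
  ∑ d : Fin K, ∑ y : Fin K → Fin M, π (x, k, d, y)

/-- Corollary: counterfactual risk under the additive loss with covariates.
`π` is a pmf on `𝒳 × (Fin K) × (Fin K) × (Fin K → Fin M)` interpreted as the joint law of
`(X, D, D*, Y(·))`. Under conditional strong ignorability, for an additive counterfactual loss
with covariate-dependent weights `ω` and intercept `ϖ`, the counterfactual risk
`E[ℓ(X, D*, Y(·))]` equals
`Σ_{x : π(X=x)>0} Σ_{d,k,m} ω x k d m · π(D* = d, Y(D) = m | D = k, X = x) · π(X = x) + E[C(X)]`,
where `C(x) = Σ_y ϖ x y · π(Y(·) = y | X = x)`. -/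
theorem stmt_2 (K M : ℕ) (hK : 2 ≤ K) (hM : 2 ≤ M)
    (𝒳 : Type) [Fintype 𝒳]
    (π : 𝒳 × Fin K × Fin K × (Fin K → Fin M) → ℝ)
    (hnn : ∀ z, 0 ≤ π z)
    (hsum : ∑ z, π z = 1)
    -- conditional independence of D and (D*, Y(·)) given X = x, for x with π(X = x) > 0:
    (hindep : ∀ x : 𝒳, 0 < margX K M 𝒳 π x →
      ∀ (k d : Fin K) (y : Fin K → Fin M),
        π (x, k, d, y) * margX K M 𝒳 π x =
          margDX K M 𝒳 π x k * (∑ k' : Fin K, π (x, k', d, y)))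
    -- conditional overlap:
    (hpos : ∀ x : 𝒳, 0 < margX K M 𝒳 π x → ∀ k : Fin K, 0 < margDX K M 𝒳 π x k)
    -- additive covariate-dependent counterfactual loss:
    (ℓ : 𝒳 → Fin K → (Fin K → Fin M) → ℝ)
    (ω : 𝒳 → Fin K → Fin K → Fin M → ℝ)
    (ϖ : 𝒳 → (Fin K → Fin M) → ℝ)
    (hadd : ∀ (x : 𝒳) (d : Fin K) (y : Fin K → Fin M),
      ℓ x d y = (∑ k : Fin K, ω x k d (y k)) + ϖ x y) :
    -- counterfactual risk E[ℓ(X, D*, Y(·))]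
    (∑ x : 𝒳, ∑ k : Fin K, ∑ d : Fin K, ∑ y : Fin K → Fin M, ℓ x d y * π (x, k, d, y)) =
      (∑ x ∈ Finset.univ.filter (fun x : 𝒳 => 0 < margX K M 𝒳 π x),
        ∑ d : Fin K, ∑ k : Fin K, ∑ m : Fin M,
          ω x k d m *
            ((∑ y ∈ Finset.univ.filter (fun y : Fin K → Fin M => y k = m), π (x, k, d, y)) /
              margDX K M 𝒳 π x k) *
            margX K M 𝒳 π x) +
      -- E[C(X)] with C(x) = Σ_y ϖ x y · π(Y(·) = y | X = x)
      (∑ x ∈ Finset.univ.filter (fun x : 𝒳 => 0 < margX K M 𝒳 π x),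
        (∑ y : Fin K → Fin M,
          ϖ x y * ((∑ k : Fin K, ∑ d : Fin K, π (x, k, d, y)) / margX K M 𝒳 π x)) *
          margX K M 𝒳 π x) := by
  classical
  -- nonnegativity of marginals
  have hmargnn : ∀ x, 0 ≤ margX K M 𝒳 π x := fun x =>
    Finset.sum_nonneg fun _ _ => Finset.sum_nonneg fun _ _ =>
      Finset.sum_nonneg fun _ _ => hnn _
  have hzero : ∀ x : 𝒳, ¬ 0 < margX K M 𝒳 π x →
      ∀ (k d : Fin K) (y : Fin K → Fin M), π (x, k, d, y) = 0 := by
    intro x hx k d y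
    have h0 : margX K M 𝒳 π x = 0 := le_antisymm (not_lt.1 hx) (hmargnn x)
    have h1 : ∀ k ∈ (Finset.univ : Finset (Fin K)),
        (∑ d : Fin K, ∑ y : Fin K → Fin M, π (x, k, d, y)) = 0 := by
      have := (Finset.sum_eq_zero_iff_of_nonneg (fun k _ =>
        Finset.sum_nonneg fun _ _ => Finset.sum_nonneg fun _ _ => hnn _)).1 h0
      exact this
    have h2 : ∀ d ∈ (Finset.univ : Finset (Fin K)),
        (∑ y : Fin K → Fin M, π (x, k, d, y)) = 0 :=
      (Finset.sum_eq_zero_iff_of_nonneg (fun d _ =>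
        Finset.sum_nonneg fun _ _ => hnn _)).1 (h1 k (Finset.mem_univ k))
    exact (Finset.sum_eq_zero_iff_of_nonneg (fun y _ => hnn _)).1
      (h2 d (Finset.mem_univ d)) y (Finset.mem_univ y)
  -- restrict LHS to positive-margin x
  have hLHS : (∑ x : 𝒳, ∑ k : Fin K, ∑ d : Fin K, ∑ y : Fin K → Fin M,
      ℓ x d y * π (x, k, d, y)) =
      ∑ x ∈ Finset.univ.filter (fun x : 𝒳 => 0 < margX K M 𝒳 π x),
        ∑ k : Fin K, ∑ d : Fin K, ∑ y : Fin K → Fin M, ℓ x d y * π (x, k, d, y) := by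
    refine (Finset.sum_filter_of_ne ?_).symm
    intro x _ hne
    by_contra hx
    apply hne
    refine Finset.sum_eq_zero fun k _ => Finset.sum_eq_zero fun d _ =>
      Finset.sum_eq_zero fun y _ => ?_
    rw [hzero x hx k d y, mul_zero]
  rw [hLHS, ← Finset.sum_add_distrib]
  refine Finset.sum_congr rfl fun x hx => ?_
  rw [Finset.mem_filter] at hx
  have hxpos := hx.2
  have hmx : margX K M 𝒳 π x ≠ 0 := ne_of_gt hxpos
  -- split loss by additivity
  have hsplit : (∑ k : Fin K, ∑ d : Fin K, ∑ y : Fin K → Fin M,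
      ℓ x d y * π (x, k, d, y)) =
      (∑ k : Fin K, ∑ d : Fin K, ∑ y : Fin K → Fin M,
        (∑ k' : Fin K, ω x k' d (y k')) * π (x, k, d, y)) +
      (∑ k : Fin K, ∑ d : Fin K, ∑ y : Fin K → Fin M, ϖ x y * π (x, k, d, y)) := by
    rw [← Finset.sum_add_distrib]
    refine Finset.sum_congr rfl fun k _ => ?_
    rw [← Finset.sum_add_distrib]
    refine Finset.sum_congr rfl fun d _ => ?_
    rw [← Finset.sum_add_distrib]
    refine Finset.sum_congr rfl fun y _ => ?_
    rw [hadd, add_mul]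
  rw [hsplit]
  congr 1
  · -- ω part
    -- first reorganize LHS: over d, k', m of ω * (Σ_k Σ_{y : y k' = m} π)
    have hfib : ∀ (k' d : Fin K) (k : Fin K),
        (∑ y : Fin K → Fin M, ω x k' d (y k') * π (x, k, d, y)) =
        ∑ m : Fin M, ω x k' d m *
          ∑ y ∈ Finset.univ.filter (fun y : Fin K → Fin M => y k' = m), π (x, k, d, y) := by
      intro k' d k
      rw [← Finset.sum_fiberwise Finset.univ
        (fun y : Fin K → Fin M => y k') (fun y => ω x k' d (y k') * π (x, k, d, y))]
      refine Finset.sum_congr rfl fun m _ => ?_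
      rw [Finset.mul_sum]
      refine Finset.sum_congr rfl fun y hy => ?_
      rw [Finset.mem_filter] at hy
      rw [hy.2]
    have hL : (∑ k : Fin K, ∑ d : Fin K, ∑ y : Fin K → Fin M,
        (∑ k' : Fin K, ω x k' d (y k')) * π (x, k, d, y)) =
        ∑ d : Fin K, ∑ k' : Fin K, ∑ m : Fin M, ω x k' d m *
          ∑ k : Fin K,
            ∑ y ∈ Finset.univ.filter (fun y : Fin K → Fin M => y k' = m), π (x, k, d, y) := by
      rw [Finset.sum_comm]
      refine Finset.sum_congr rfl fun d _ => ?_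
      calc (∑ k : Fin K, ∑ y : Fin K → Fin M,
            (∑ k' : Fin K, ω x k' d (y k')) * π (x, k, d, y))
          = ∑ k : Fin K, ∑ k' : Fin K, ∑ y : Fin K → Fin M,
              ω x k' d (y k') * π (x, k, d, y) := by
            refine Finset.sum_congr rfl fun k _ => ?_
            rw [Finset.sum_comm]
            refine Finset.sum_congr rfl fun y _ => ?_
            rw [Finset.sum_mul]
        _ = ∑ k' : Fin K, ∑ k : Fin K, ∑ m : Fin M, ω x k' d m *
              ∑ y ∈ Finset.univ.filter (fun y : Fin K → Fin M => y k' = m),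
                π (x, k, d, y) := by
            rw [Finset.sum_comm]
            exact Finset.sum_congr rfl fun k' _ => Finset.sum_congr rfl fun k _ => hfib k' d k
        _ = ∑ k' : Fin K, ∑ m : Fin M, ω x k' d m *
              ∑ k : Fin K,
                ∑ y ∈ Finset.univ.filter (fun y : Fin K → Fin M => y k' = m),
                  π (x, k, d, y) := by
            refine Finset.sum_congr rfl fun k' _ => ?_
            rw [Finset.sum_comm]
            refine Finset.sum_congr rfl fun m _ => ?_
            rw [Finset.mul_sum]
    rw [hL]
    refine Finset.sum_congr rfl fun d _ => Finset.sum_congr rfl fun k' _ =>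
      Finset.sum_congr rfl fun m _ => ?_
    -- per-term: ω * (Σ_k Σ_{y∈F} π) = ω * (Σ_{y∈F} π(x,k',d,y) / margDX k') * margX
    have hDpos := hpos x hxpos k'
    have hDne : margDX K M 𝒳 π x k' ≠ 0 := ne_of_gt hDpos
    have key : (∑ y ∈ Finset.univ.filter (fun y : Fin K → Fin M => y k' = m),
          π (x, k', d, y)) * margX K M 𝒳 π x =
        margDX K M 𝒳 π x k' *
          ∑ k : Fin K,
            ∑ y ∈ Finset.univ.filter (fun y : Fin K → Fin M => y k' = m),
              π (x, k, d, y) := by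
      rw [Finset.sum_mul, Finset.sum_comm, Finset.mul_sum]
      refine Finset.sum_congr rfl fun y _ => ?_
      exact hindep x hxpos k' d y
    have : (∑ y ∈ Finset.univ.filter (fun y : Fin K → Fin M => y k' = m),
          π (x, k', d, y)) / margDX K M 𝒳 π x k' * margX K M 𝒳 π x =
        ∑ k : Fin K,
          ∑ y ∈ Finset.univ.filter (fun y : Fin K → Fin M => y k' = m),
            π (x, k, d, y) := by
      rw [div_mul_eq_mul_div, key, mul_comm, mul_div_assoc, div_self hDne, mul_one]
    rw [mul_assoc, this]
  · -- ϖ part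
    have hR : (∑ y : Fin K → Fin M,
        ϖ x y * ((∑ k : Fin K, ∑ d : Fin K, π (x, k, d, y)) / margX K M 𝒳 π x)) *
          margX K M 𝒳 π x =
        ∑ y : Fin K → Fin M, ϖ x y * ∑ k : Fin K, ∑ d : Fin K, π (x, k, d, y) := by
      rw [Finset.sum_mul]
      refine Finset.sum_congr rfl fun y _ => ?_
      rw [mul_assoc, div_mul_cancel₀ _ hmx]
    rw [hR]
    calc (∑ k : Fin K, ∑ d : Fin K, ∑ y : Fin K → Fin M, ϖ x y * π (x, k, d, y))
        = ∑ k : Fin K, ∑ y : Fin K → Fin M, ∑ d : Fin K, ϖ x y * π (x, k, d, y) := by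
          exact Finset.sum_congr rfl fun k _ => Finset.sum_comm
      _ = ∑ y : Fin K → Fin M, ∑ k : Fin K, ∑ d : Fin K, ϖ x y * π (x, k, d, y) :=
          Finset.sum_comm
      _ = ∑ y : Fin K → Fin M, ϖ x y * ∑ k : Fin K, ∑ d : Fin K, π (x, k, d, y) := by
          refine Finset.sum_congr rfl fun y _ => ?_
          rw [Finset.mul_sum]
          exact Finset.sum_congr rfl fun k _ => (Finset.mul_sum _ _ _).symm
end

section
/- (Theorem 2: additivity is necessary and sufficient for identification up to a constant.) Let ℓ : Fin K → (Fin K → Fin M) → ℝ be a counterfactual loss. The following are equivalent: (i) there exists a function f such that for every probability mass function p on (Fin K) × (Fin K → Fin M), R(p; ℓ) = f(Φ⁺(p)); (ii) ℓ is additive, i.e., there exist weights ω : Fin K → Fin K → Fin M → ℝ and an intercept ϖ : (Fin K → Fin M) → ℝ with ℓ d y = (Σ over k of ω k d (y k)) + ϖ y for all d, y. -/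
/-! The risk `p ↦ R(p; ℓ)` is linear. If on the probability simplex it is a function of `Φ⁺(p)`,
then it vanishes on `ker Φ⁺`: a kernel vector has total mass zero, so perturbing the uniform
distribution along it stays a pmf with the same `Φ⁺`. A linear functional vanishing on `ker Φ⁺`
factors as `g ∘ Φ⁺` with `g` linear, and writing `g` in coordinates and evaluating the risk at
point masses shows that `ℓ` is additive. Conversely, for an additive loss the risk is an explicit
linear function of `Φ⁺(p)`. -/

/-- The counterfactual risk `R(p; ℓ) = Σ_{(d,y)} ℓ d y · p(d,y)` for a pmf `p` on
`(Fin K) × (Fin K → Fin M)` (joint law of the evaluated decision and the potential outcomes). -/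
def cfRisk (K M : ℕ) (p : Fin K × (Fin K → Fin M) → ℝ)
    (ℓ : Fin K → (Fin K → Fin M) → ℝ) : ℝ :=
  ∑ d : Fin K, ∑ y : Fin K → Fin M, ℓ d y * p (d, y)

/-- The marginal map `Φ`: `Φ(p)(d, k, m) = Σ_{y : y k = m} p(d, y)`. -/
def Phi (K M : ℕ) (p : Fin K × (Fin K → Fin M) → ℝ) : Fin K × Fin K × Fin M → ℝ :=
  fun q => ∑ y ∈ Finset.univ.filter (fun y : Fin K → Fin M => y q.2.1 = q.2.2), p (q.1, y)

/-- The extended marginal map `Φ⁺`: the pair of `Φ(p)` and the marginal of `p` on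
potential-outcome vectors. -/
def PhiPlus (K M : ℕ) (p : Fin K × (Fin K → Fin M) → ℝ) :
    (Fin K × Fin K × Fin M → ℝ) × ((Fin K → Fin M) → ℝ) :=
  (Phi K M p, fun y => ∑ d : Fin K, p (d, y))

open Finset Filter Topology

section Factorization

variable {Z W : Type*} [Fintype Z] [AddCommGroup W] [Module ℝ W]

theorem LinearMap.map_eq_zero_of_eq_comp_on_stdSimplex (φ : (Z → ℝ) →ₗ[ℝ] ℝ)
    (A : (Z → ℝ) →ₗ[ℝ] W) (f : W → ℝ) (hf : ∀ p ∈ stdSimplex ℝ Z, φ p = f (A p))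
    {v : Z → ℝ} (hAv : A v = 0) (hv : ∑ z, v z = 0) : φ v = 0 := by
  cases isEmpty_or_nonempty Z with
  | inl _ => rw [Subsingleton.elim v 0, map_zero]
  | inr _ =>
    -- Moving from the uniform distribution `u` a little along `v` stays in the simplex and
    -- does not change `A`, so it does not change `φ` either.
    set u : Z → ℝ := fun _ => (Fintype.card Z : ℝ)⁻¹
    have hu : u ∈ stdSimplex ℝ Z := ⟨fun _ => by positivity, by simp [u]⟩
    have hnonneg : ∀ᶠ ε in 𝓝 (0 : ℝ), ∀ z, 0 ≤ u z + ε * v z := by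
      refine eventually_all.2 fun z => ?_
      have hlim : Tendsto (fun ε : ℝ => u z + ε * v z) (𝓝 0) (𝓝 (u z)) := by
        have hcont : Continuous fun ε : ℝ => u z + ε * v z := by fun_prop
        simpa using hcont.tendsto 0
      exact (hlim.eventually_const_lt (by positivity)).mono fun _ => le_of_lt
    obtain ⟨ε, hε, hε0⟩ :=
      ((hnonneg.filter_mono (nhdsWithin_le_nhds (s := {0}ᶜ))).and eventually_mem_nhdsWithin).exists
    have hp : u + ε • v ∈ stdSimplex ℝ Z :=
      ⟨hε, by simp [sum_add_distrib, ← mul_sum, hv, hu.2]⟩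
    have hφ : φ u + ε * φ v = φ u := by
      rw [← smul_eq_mul, ← map_smul, ← map_add, hf _ hp, hf _ hu, map_add, map_smul, hAv,
        smul_zero, add_zero]
    exact (mul_eq_zero.1 (add_eq_left.1 hφ)).resolve_left hε0

theorem LinearMap.exists_dual_eq_comp_of_eq_comp_on_stdSimplex (φ : (Z → ℝ) →ₗ[ℝ] ℝ)
    (A : (Z → ℝ) →ₗ[ℝ] W) (hA : ∀ v, A v = 0 → ∑ z, v z = 0) (f : W → ℝ)
    (hf : ∀ p ∈ stdSimplex ℝ Z, φ p = f (A p)) : ∃ g : Module.Dual ℝ W, φ = g ∘ₗ A := by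
  have hφ : φ ∈ LinearMap.range A.dualMap := by
    rw [LinearMap.range_dualMap_eq_dualAnnihilator_ker, Submodule.mem_dualAnnihilator]
    exact fun v hv => φ.map_eq_zero_of_eq_comp_on_stdSimplex A f hf hv (hA v hv)
  obtain ⟨g, rfl⟩ := hφ
  exact ⟨g, rfl⟩

end Factorization

theorem Module.Dual.exists_eq_sum_mul_add_sum_mul {R Q Y : Type*} [CommSemiring R] [Fintype Q]
    [Fintype Y] (g : Module.Dual R ((Q → R) × (Y → R))) :
    ∃ (α : Q → R) (β : Y → R), ∀ a b, g (a, b) = ∑ q, α q * a q + ∑ y, β y * b y := by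
  classical
  refine ⟨fun q => g (fun j => if q = j then 1 else 0, 0),
    fun y => g (0, fun j => if y = j then 1 else 0), fun a b => ?_⟩
  have hab : (a, b) = LinearMap.inl R _ _ a + LinearMap.inr R _ _ b := by simp
  rw [hab, map_add, ← LinearMap.comp_apply, ← LinearMap.comp_apply,
    LinearMap.pi_apply_eq_sum_univ (g ∘ₗ _) a, LinearMap.pi_apply_eq_sum_univ (g ∘ₗ _) b]
  simp [mul_comm]

section CounterfactualRisk

variable (K M : ℕ)

theorem cfRisk_eq_sum (p : Fin K × (Fin K → Fin M) → ℝ) (ℓ : Fin K → (Fin K → Fin M) → ℝ) :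
    cfRisk K M p ℓ = ∑ z, ℓ z.1 z.2 * p z :=
  (Fintype.sum_prod_type' fun d y => ℓ d y * p (d, y)).symm

theorem cfRisk_single (ℓ : Fin K → (Fin K → Fin M) → ℝ) (z : Fin K × (Fin K → Fin M)) :
    cfRisk K M (Pi.single z 1) ℓ = ℓ z.1 z.2 := by
  simp [cfRisk_eq_sum, Pi.single_apply]

def cfRiskLinear (ℓ : Fin K → (Fin K → Fin M) → ℝ) :
    (Fin K × (Fin K → Fin M) → ℝ) →ₗ[ℝ] ℝ where
  toFun p := cfRisk K M p ℓ
  map_add' p q := by simp [cfRisk_eq_sum, mul_add, sum_add_distrib]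
  map_smul' c p := by simp [cfRisk_eq_sum, mul_sum, mul_left_comm]

def phiPlusLinear :
    (Fin K × (Fin K → Fin M) → ℝ) →ₗ[ℝ]
      (Fin K × Fin K × Fin M → ℝ) × ((Fin K → Fin M) → ℝ) where
  toFun := PhiPlus K M
  map_add' p q := by ext <;> simp [PhiPlus, Phi, sum_add_distrib]
  map_smul' c p := by ext <;> simp [PhiPlus, Phi, mul_sum]

theorem sum_eq_zero_of_phiPlus_eq_zero {v : Fin K × (Fin K → Fin M) → ℝ}
    (hv : PhiPlus K M v = 0) : ∑ z, v z = 0 := by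
  rw [Fintype.sum_prod_type, sum_comm]
  exact sum_eq_zero fun y _ => congr_fun (congr_arg Prod.snd hv) y

theorem sum_mul_phi (p : Fin K × (Fin K → Fin M) → ℝ) (d k : Fin K) (c : Fin M → ℝ) :
    ∑ m, c m * Phi K M p (d, k, m) = ∑ y, c (y k) * p (d, y) := by
  simp only [Phi, mul_sum]
  rw [← sum_fiberwise univ (fun y : Fin K → Fin M => y k)]
  refine sum_congr rfl fun m _ => sum_congr rfl fun y hy => ?_
  rw [(mem_filter.1 hy).2]

theorem cfRisk_additive (ω : Fin K → Fin K → Fin M → ℝ) (ϖ : (Fin K → Fin M) → ℝ)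
    (p : Fin K × (Fin K → Fin M) → ℝ) :
    cfRisk K M p (fun d y => ∑ k, ω k d (y k) + ϖ y) =
      ∑ q, ω q.2.1 q.1 q.2.2 * Phi K M p q + ∑ y, ϖ y * ∑ d, p (d, y) := by
  simp only [cfRisk, add_mul, sum_add_distrib, sum_mul, mul_sum]
  congr 1
  · simp only [Fintype.sum_prod_type, sum_mul_phi]
    exact sum_congr rfl fun d _ => sum_comm
  · exact sum_comm

end CounterfactualRisk

theorem stmt_3_general (K M : ℕ)
    (ℓ : Fin K → (Fin K → Fin M) → ℝ) :
    (∃ f : ((Fin K × Fin K × Fin M → ℝ) × ((Fin K → Fin M) → ℝ)) → ℝ,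
      ∀ p : Fin K × (Fin K → Fin M) → ℝ,
        (∀ z, 0 ≤ p z) → (∑ z, p z = 1) →
        cfRisk K M p ℓ = f (PhiPlus K M p)) ↔
    (∃ (ω : Fin K → Fin K → Fin M → ℝ) (ϖ : (Fin K → Fin M) → ℝ),
      ∀ (d : Fin K) (y : Fin K → Fin M), ℓ d y = (∑ k : Fin K, ω k d (y k)) + ϖ y) := by
  constructor
  · rintro ⟨f, hf⟩
    obtain ⟨g, hg⟩ := (cfRiskLinear K M ℓ).exists_dual_eq_comp_of_eq_comp_on_stdSimplex
      (phiPlusLinear K M) (fun _ => sum_eq_zero_of_phiPlus_eq_zero K M) f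
      (fun p hp => hf p hp.1 hp.2)
    obtain ⟨α, β, hαβ⟩ := g.exists_eq_sum_mul_add_sum_mul
    refine ⟨fun k d m => α (d, k, m), β, fun d y => ?_⟩
    calc ℓ d y = cfRisk K M (Pi.single (d, y) 1) ℓ := (cfRisk_single K M ℓ (d, y)).symm
      _ = g (PhiPlus K M (Pi.single (d, y) 1)) := LinearMap.congr_fun hg _
      _ = cfRisk K M (Pi.single (d, y) 1) (fun d y => ∑ k, α (d, k, y k) + β y) :=
        (hαβ _ _).trans (cfRisk_additive K M (fun k d m => α (d, k, m)) β _).symm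
      _ = ∑ k, α (d, k, y k) + β y := cfRisk_single K M _ (d, y)
  · rintro ⟨ω, ϖ, hℓ⟩
    refine ⟨fun w => ∑ q, ω q.2.1 q.1 q.2.2 * w.1 q + ∑ y, ϖ y * w.2 y, fun p _ _ => ?_⟩
    rw [show ℓ = _ from funext₂ hℓ, cfRisk_additive]
    rfl

/-- Theorem 2: additivity is necessary and sufficient for identification up to a
constant: the counterfactual risk `R(·; ℓ)` is a function of the extended marginals `Φ⁺(p)`
over all pmfs `p` if and only if `ℓ` is additive. -/
theorem stmt_3 (K M : ℕ) (hK : 2 ≤ K) (hM : 2 ≤ M)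
    (ℓ : Fin K → (Fin K → Fin M) → ℝ) :
    (∃ f : ((Fin K × Fin K × Fin M → ℝ) × ((Fin K → Fin M) → ℝ)) → ℝ,
      ∀ p : Fin K × (Fin K → Fin M) → ℝ,
        (∀ z, 0 ≤ p z) → (∑ z, p z = 1) →
        cfRisk K M p ℓ = f (PhiPlus K M p)) ↔
    (∃ (ω : Fin K → Fin K → Fin M → ℝ) (ϖ : (Fin K → Fin M) → ℝ),
      ∀ (d : Fin K) (y : Fin K → Fin M), ℓ d y = (∑ k : Fin K, ω k d (y k)) + ϖ y) :=
  stmt_3_general K M ℓ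
end

section
/- (Corollary: necessary and sufficient condition for exact identification.) Let ℓ : Fin K → (Fin K → Fin M) → ℝ be a counterfactual loss. The following are equivalent: (i) there exists a function f such that for every probability mass function p on (Fin K) × (Fin K → Fin M), R(p; ℓ) = f(Φ(p)); (ii) there exist weights ω : Fin K → Fin K → Fin M → ℝ with ℓ d y = Σ over k of ω k d (y k) for all d, y. Moreover, when (ii) holds, R(p; ℓ) = Σ over d, k ∈ Fin K and m ∈ Fin M of ω k d m · Φ(p)(d, k, m) for every pmf p. -/
/-!
If the risk is a function of `Φ(p)` on probability vectors, then by homogeneity any two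
nonnegative vectors with the same total mass and the same marginals have the same risk.
Fix `d`, `y` and the baseline `c = 0`, and compare `δ(d, y) + K δ(d, c)` with
`Σ_j δ(d, c[j ↦ y j]) + δ(d, c)`: in every coordinate `k` both put mass `1` on `y k` and
mass `K` on `c k`. Equal risks give `ℓ d y = Σ_j ℓ d (c[j ↦ y j]) - (K - 1) ℓ d c`, an
additive decomposition. Conversely, for an additive loss the risk is `Σ ω · Φ(p)`, by grouping
the sum over `y` according to the value of `y k`.
-/

theorem sum_update_apply_add_eq {ι β M : Type*} [Fintype ι] [DecidableEq ι] [AddCommMonoid M]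
    (g : β → M) (c y : ι → β) (k : ι) :
    ∑ j, g (Function.update c j (y j) k) + g (c k) = g (y k) + Fintype.card ι • g (c k) := by
  have hoff : ∀ j ∈ ({k}ᶜ : Finset ι), g (Function.update c j (y j) k) = g (c k) := fun j hj =>
    by rw [Function.update_of_ne (by simpa [eq_comm] using hj)]
  rw [Fintype.sum_eq_add_sum_compl k, Finset.sum_congr rfl hoff, Finset.sum_const,
    Finset.card_compl, Finset.card_singleton, add_assoc, ← succ_nsmul,
    Nat.sub_add_cancel (Fintype.card_pos_iff.2 ⟨k⟩), Function.update_self]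

theorem eq_sum_update_sub_of_add_card_mul_eq {ι β : Type*} [Fintype ι] [DecidableEq ι]
    [Nonempty ι] (h : (ι → β) → ℝ) (c y : ι → β)
    (hy : h y + Fintype.card ι * h c = ∑ j, h (Function.update c j (y j)) + h c) :
    h y = ∑ k, (h (Function.update c k (y k)) - (Fintype.card ι - 1) / Fintype.card ι * h c) := by
  have hcard : (Fintype.card ι : ℝ) ≠ 0 := by positivity
  rw [Finset.sum_sub_distrib, Finset.sum_const, Finset.card_univ, nsmul_eq_mul]
  field_simp
  linarith

theorem eq_of_eq_comp_of_sum_eq {α E : Type*} [Fintype α] [SMul ℝ E]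
    {R : (α → ℝ) → ℝ} {Φ : (α → ℝ) → E} (hR : ∀ (t : ℝ) p, R (t • p) = t * R p)
    (hΦ : ∀ (t : ℝ) p, Φ (t • p) = t • Φ p) {f : E → ℝ}
    (hf : ∀ p : α → ℝ, (∀ z, 0 ≤ p z) → ∑ z, p z = 1 → R p = f (Φ p))
    {p q : α → ℝ} (hp : ∀ z, 0 ≤ p z) (hq : ∀ z, 0 ≤ q z) (hpq : ∑ z, p z = ∑ z, q z)
    (hp0 : ∑ z, p z ≠ 0) (hΦpq : Φ p = Φ q) : R p = R q := by
  set t := (∑ z, p z)⁻¹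
  have ht : 0 ≤ t := inv_nonneg.2 (Finset.sum_nonneg fun z _ => hp z)
  have hmass (r : α → ℝ) (hr : ∑ z, r z = ∑ z, p z) : ∑ z, (t • r) z = 1 := by
    simp only [Pi.smul_apply, smul_eq_mul, ← Finset.mul_sum, hr, t, inv_mul_cancel₀ hp0]
  have hp' := hf (t • p) (fun z => mul_nonneg ht (hp z)) (hmass p rfl)
  have hq' := hf (t • q) (fun z => mul_nonneg ht (hq z)) (hmass q hpq.symm)
  refine mul_left_cancel₀ (inv_ne_zero hp0) ?_
  rw [← hR, ← hR, hp', hq', hΦ, hΦ, hΦpq]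

section Marginals

variable {K M : ℕ}

theorem cfRisk_eq_dotProduct (p : Fin K × (Fin K → Fin M) → ℝ)
    (ℓ : Fin K → (Fin K → Fin M) → ℝ) : cfRisk K M p ℓ = Function.uncurry ℓ ⬝ᵥ p := by
  rw [cfRisk, dotProduct, Fintype.sum_prod_type]
  rfl

theorem cfRisk_smul (t : ℝ) (p : Fin K × (Fin K → Fin M) → ℝ)
    (ℓ : Fin K → (Fin K → Fin M) → ℝ) : cfRisk K M (t • p) ℓ = t * cfRisk K M p ℓ := by
  simp only [cfRisk_eq_dotProduct, dotProduct_smul, smul_eq_mul]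

theorem Phi_apply_eq_cfRisk (p : Fin K × (Fin K → Fin M) → ℝ) (d k : Fin K) (m : Fin M) :
    Phi K M p (d, k, m) = cfRisk K M p (fun d' y => if d' = d ∧ y k = m then 1 else 0) := by
  simp [Phi, cfRisk, Finset.sum_filter, ite_and]

theorem Phi_smul (t : ℝ) (p : Fin K × (Fin K → Fin M) → ℝ) :
    Phi K M (t • p) = t • Phi K M p := by
  funext ⟨d, k, m⟩
  simp only [Phi_apply_eq_cfRisk, cfRisk_smul, Pi.smul_apply, smul_eq_mul]

theorem sum_eq_cfRisk_one (p : Fin K × (Fin K → Fin M) → ℝ) :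
    ∑ z, p z = cfRisk K M p (fun _ _ => 1) := by
  rw [cfRisk_eq_dotProduct, ← one_dotProduct]
  rfl

theorem cfRisk_eq_sum_mul_Phi_of_additive {ω : Fin K → Fin K → Fin M → ℝ}
    {ℓ : Fin K → (Fin K → Fin M) → ℝ} (hω : ∀ d y, ℓ d y = ∑ k, ω k d (y k))
    (p : Fin K × (Fin K → Fin M) → ℝ) :
    cfRisk K M p ℓ = ∑ d, ∑ k, ∑ m, ω k d m * Phi K M p (d, k, m) := by
  refine Finset.sum_congr rfl fun d _ => ?_
  simp only [hω, Finset.sum_mul]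
  rw [Finset.sum_comm]
  refine Finset.sum_congr rfl fun k _ => ?_
  rw [← Finset.sum_fiberwise Finset.univ (fun y : Fin K → Fin M => y k)]
  refine Finset.sum_congr rfl fun m _ => ?_
  rw [Phi, Finset.mul_sum]
  exact Finset.sum_congr rfl fun y hy => by rw [(Finset.mem_filter.1 hy).2]

def concentratedMass (d : Fin K) (c y : Fin K → Fin M) : Fin K × (Fin K → Fin M) → ℝ :=
  Pi.single (d, y) 1 + (K : ℝ) • Pi.single (d, c) 1

def spreadMass (d : Fin K) (c y : Fin K → Fin M) : Fin K × (Fin K → Fin M) → ℝ :=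
  ∑ j, Pi.single (d, Function.update c j (y j)) 1 + Pi.single (d, c) 1

theorem cfRisk_concentratedMass (d : Fin K) (c y : Fin K → Fin M)
    (ℓ : Fin K → (Fin K → Fin M) → ℝ) :
    cfRisk K M (concentratedMass d c y) ℓ = ℓ d y + K * ℓ d c := by
  simp [concentratedMass, cfRisk_eq_dotProduct, dotProduct_add, dotProduct_smul]

theorem cfRisk_spreadMass (d : Fin K) (c y : Fin K → Fin M)
    (ℓ : Fin K → (Fin K → Fin M) → ℝ) :
    cfRisk K M (spreadMass d c y) ℓ = ∑ j, ℓ d (Function.update c j (y j)) + ℓ d c := by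
  simp [spreadMass, cfRisk_eq_dotProduct, dotProduct_add, dotProduct_sum]

theorem concentratedMass_nonneg (d : Fin K) (c y : Fin K → Fin M) :
    0 ≤ concentratedMass d c y :=
  add_nonneg (Pi.single_nonneg.2 zero_le_one)
    (smul_nonneg (Nat.cast_nonneg K) (Pi.single_nonneg.2 zero_le_one))

theorem spreadMass_nonneg (d : Fin K) (c y : Fin K → Fin M) : 0 ≤ spreadMass d c y :=
  add_nonneg (Finset.sum_nonneg fun _ _ => Pi.single_nonneg.2 zero_le_one)
    (Pi.single_nonneg.2 zero_le_one)

theorem sum_concentratedMass (d : Fin K) (c y : Fin K → Fin M) :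
    ∑ z, concentratedMass d c y z = K + 1 := by
  rw [sum_eq_cfRisk_one, cfRisk_concentratedMass, mul_one, add_comm]

theorem sum_spreadMass (d : Fin K) (c y : Fin K → Fin M) :
    ∑ z, spreadMass d c y z = K + 1 := by
  simp [sum_eq_cfRisk_one, cfRisk_spreadMass]

theorem Phi_concentratedMass_eq_spreadMass (d : Fin K) (c y : Fin K → Fin M) :
    Phi K M (concentratedMass d c y) = Phi K M (spreadMass d c y) := by
  funext ⟨d', k, m⟩
  rw [Phi_apply_eq_cfRisk, Phi_apply_eq_cfRisk, cfRisk_concentratedMass, cfRisk_spreadMass]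
  by_cases hd : d = d'
  · have := sum_update_apply_add_eq (fun b => if b = m then (1 : ℝ) else 0) c y k
    simp only [hd, true_and, Fintype.card_fin, nsmul_eq_mul] at this ⊢
    linarith
  · simp [hd]

end Marginals

theorem stmt_4_general (K M : ℕ) (hM : 2 ≤ M)
    (ℓ : Fin K → (Fin K → Fin M) → ℝ) :
    ((∃ f : (Fin K × Fin K × Fin M → ℝ) → ℝ,
      ∀ p : Fin K × (Fin K → Fin M) → ℝ,
        (∀ z, 0 ≤ p z) → (∑ z, p z = 1) →
        cfRisk K M p ℓ = f (Phi K M p)) ↔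
    (∃ ω : Fin K → Fin K → Fin M → ℝ,
      ∀ (d : Fin K) (y : Fin K → Fin M), ℓ d y = ∑ k : Fin K, ω k d (y k))) ∧
    (∀ ω : Fin K → Fin K → Fin M → ℝ,
      (∀ (d : Fin K) (y : Fin K → Fin M), ℓ d y = ∑ k : Fin K, ω k d (y k)) →
      ∀ p : Fin K × (Fin K → Fin M) → ℝ,
        (∀ z, 0 ≤ p z) → (∑ z, p z = 1) →
        cfRisk K M p ℓ =
          ∑ d : Fin K, ∑ k : Fin K, ∑ m : Fin M, ω k d m * Phi K M p (d, k, m)) := by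
  refine ⟨⟨fun ⟨f, hf⟩ => ?_, fun ⟨ω, hω⟩ =>
    ⟨fun Φ => ∑ d, ∑ k, ∑ m, ω k d m * Φ (d, k, m), fun p _ _ =>
      cfRisk_eq_sum_mul_Phi_of_additive hω p⟩⟩,
    fun ω hω p _ _ => cfRisk_eq_sum_mul_Phi_of_additive hω p⟩
  have : NeZero M := ⟨by omega⟩
  let c : Fin K → Fin M := fun _ => 0
  have hbalance (d : Fin K) (y : Fin K → Fin M) :
      ℓ d y + K * ℓ d c = ∑ j, ℓ d (Function.update c j (y j)) + ℓ d c := by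
    rw [← cfRisk_concentratedMass, ← cfRisk_spreadMass]
    refine eq_of_eq_comp_of_sum_eq (fun t p => cfRisk_smul t p ℓ) Phi_smul hf
      (concentratedMass_nonneg d c y) (spreadMass_nonneg d c y) ?_ ?_
      (Phi_concentratedMass_eq_spreadMass d c y)
    · rw [sum_concentratedMass, sum_spreadMass]
    · rw [sum_concentratedMass]
      positivity
  refine ⟨fun k d m => ℓ d (Function.update c k m) - (K - 1) / K * ℓ d c, fun d y => ?_⟩
  have : Nonempty (Fin K) := ⟨d⟩
  simpa using eq_sum_update_sub_of_add_card_mul_eq (ℓ d) c y (by simpa using hbalance d y)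

/-- Corollary: necessary and sufficient condition for exact identification:
the counterfactual risk `R(·; ℓ)` is a function of the marginals `Φ(p)` over all pmfs `p`
if and only if `ℓ` is additive with no intercept term; moreover, in that case
`R(p; ℓ) = Σ_{d,k,m} ω k d m · Φ(p)(d, k, m)` for every pmf `p`. -/
theorem stmt_4 (K M : ℕ) (hK : 2 ≤ K) (hM : 2 ≤ M)
    (ℓ : Fin K → (Fin K → Fin M) → ℝ) :
    ((∃ f : (Fin K × Fin K × Fin M → ℝ) → ℝ,
      ∀ p : Fin K × (Fin K → Fin M) → ℝ,
        (∀ z, 0 ≤ p z) → (∑ z, p z = 1) →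
        cfRisk K M p ℓ = f (Phi K M p)) ↔
    (∃ ω : Fin K → Fin K → Fin M → ℝ,
      ∀ (d : Fin K) (y : Fin K → Fin M), ℓ d y = ∑ k : Fin K, ω k d (y k))) ∧
    (∀ ω : Fin K → Fin K → Fin M → ℝ,
      (∀ (d : Fin K) (y : Fin K → Fin M), ℓ d y = ∑ k : Fin K, ω k d (y k)) →
      ∀ p : Fin K × (Fin K → Fin M) → ℝ,
        (∀ z, 0 ≤ p z) → (∑ z, p z = 1) →
        cfRisk K M p ℓ =
          ∑ d : Fin K, ∑ k : Fin K, ∑ m : Fin M, ω k d m * Phi K M p (d, k, m)) :=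
  stmt_4_general K M hM ℓ
end

section
/- (Corollary: accuracy–difficulty decomposition for binary outcomes.) Let the outcome be binary (M = 2, with outcome 1 desirable) and let ℓ be an additive counterfactual loss with weights ω and intercept ϖ. Then for every pmf p on (Fin K) × (Fin K → Fin 2): R(p; ℓ) = Σ over d of ζ(d, d) · p(D* = d, Y(d) = 1) + Σ over d and k ≠ d of ζ(k, d) · p(D* = d, Y(k) = 1) + Σ over d of ξ(d) · p(D* = d) + C, where ζ(k, d) = ω k d 1 − ω k d 0, ξ(d) = Σ over k of ω k d 0, C = Σ over potential-outcome vectors y of ϖ(y) · p(Y(·) = y), p(D* = d, Y(k) = 1) = Σ over {y : y k = 1} of p(d, y), p(D* = d) = Σ over y of p(d, y), and p(Y(·) = y) = Σ over d of p(d, y). -/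
/-- Corollary: accuracy–difficulty decomposition for binary outcomes.
For a binary outcome (`Fin 2`, with outcome `1` desirable) and an additive counterfactual loss
with weights `ω` and intercept `ϖ`, for every pmf `p` on `(Fin K) × (Fin K → Fin 2)`:
`R(p; ℓ) = Σ_d ζ(d,d)·p(D*=d, Y(d)=1) + Σ_d Σ_{k≠d} ζ(k,d)·p(D*=d, Y(k)=1)
           + Σ_d ξ(d)·p(D*=d) + C`,
where `ζ(k,d) = ω k d 1 − ω k d 0`, `ξ(d) = Σ_k ω k d 0`, and
`C = Σ_y ϖ(y)·p(Y(·)=y)`. -/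
theorem stmt_5 (K : ℕ) (hK : 2 ≤ K)
    (ℓ : Fin K → (Fin K → Fin 2) → ℝ)
    (ω : Fin K → Fin K → Fin 2 → ℝ)
    (ϖ : (Fin K → Fin 2) → ℝ)
    (hadd : ∀ (d : Fin K) (y : Fin K → Fin 2), ℓ d y = (∑ k : Fin K, ω k d (y k)) + ϖ y)
    (p : Fin K × (Fin K → Fin 2) → ℝ)
    (hnn : ∀ z, 0 ≤ p z)
    (hsum : ∑ z, p z = 1) :
    (∑ d : Fin K, ∑ y : Fin K → Fin 2, ℓ d y * p (d, y)) =
      (∑ d : Fin K,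
          (ω d d 1 - ω d d 0) *
            (∑ y ∈ Finset.univ.filter (fun y : Fin K → Fin 2 => y d = 1), p (d, y))) +
      (∑ d : Fin K, ∑ k ∈ Finset.univ.filter (fun k : Fin K => k ≠ d),
          (ω k d 1 - ω k d 0) *
            (∑ y ∈ Finset.univ.filter (fun y : Fin K → Fin 2 => y k = 1), p (d, y))) +
      (∑ d : Fin K, (∑ k : Fin K, ω k d 0) * (∑ y : Fin K → Fin 2, p (d, y))) +
      (∑ y : Fin K → Fin 2, ϖ y * (∑ d : Fin K, p (d, y))) := by
  have hω : ∀ (k d : Fin K) (y : Fin K → Fin 2),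
      ω k d (y k) = ω k d 0 + (if y k = 1 then ω k d 1 - ω k d 0 else 0) := by
    intro k d y
    have : y k = 0 ∨ y k = 1 := by omega
    rcases this with h | h <;> rw [h] <;> simp
  -- key per-(d,k) computation
  have hdk : ∀ (d k : Fin K),
      (∑ y : Fin K → Fin 2, ω k d (y k) * p (d, y)) =
        ω k d 0 * (∑ y : Fin K → Fin 2, p (d, y)) +
        (ω k d 1 - ω k d 0) *
          (∑ y ∈ Finset.univ.filter (fun y : Fin K → Fin 2 => y k = 1), p (d, y)) := by
    intro d k
    rw [Finset.mul_sum, Finset.mul_sum, Finset.sum_filter, ← Finset.sum_add_distrib]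
    apply Finset.sum_congr rfl
    intro y _
    rw [hω k d y]
    by_cases h : y k = 1 <;> simp [h] <;> ring
  calc (∑ d : Fin K, ∑ y : Fin K → Fin 2, ℓ d y * p (d, y))
      = (∑ d : Fin K, ∑ k : Fin K, ∑ y : Fin K → Fin 2, ω k d (y k) * p (d, y)) +
        (∑ d : Fin K, ∑ y : Fin K → Fin 2, ϖ y * p (d, y)) := by
        rw [← Finset.sum_add_distrib]
        apply Finset.sum_congr rfl
        intro d _
        simp only [hadd, add_mul]
        rw [Finset.sum_add_distrib]
        congr 1
        simp only [Finset.sum_mul]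
        exact Finset.sum_comm
    _ = (∑ d : Fin K, ∑ k : Fin K,
          (ω k d 0 * (∑ y : Fin K → Fin 2, p (d, y)) +
            (ω k d 1 - ω k d 0) *
              (∑ y ∈ Finset.univ.filter (fun y : Fin K → Fin 2 => y k = 1), p (d, y)))) +
        (∑ y : Fin K → Fin 2, ϖ y * (∑ d : Fin K, p (d, y))) := by
        rw [Finset.sum_comm (s := Finset.univ) (t := Finset.univ)
          (f := fun d y => ϖ y * p (d, y))]
        congr 1
        · exact Finset.sum_congr rfl fun d _ => Finset.sum_congr rfl fun k _ => hdk d k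
        · exact Finset.sum_congr rfl fun y _ => by rw [Finset.mul_sum]
    _ = _ := by
        congr 1
        have key : ∀ d : Fin K,
            (∑ k : Fin K,
              (ω k d 0 * (∑ y : Fin K → Fin 2, p (d, y)) +
                (ω k d 1 - ω k d 0) *
                  (∑ y ∈ Finset.univ.filter (fun y : Fin K → Fin 2 => y k = 1), p (d, y)))) =
            (ω d d 1 - ω d d 0) *
              (∑ y ∈ Finset.univ.filter (fun y : Fin K → Fin 2 => y d = 1), p (d, y)) +
            (∑ k ∈ Finset.univ.filter (fun k : Fin K => k ≠ d),
              (ω k d 1 - ω k d 0) *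
                (∑ y ∈ Finset.univ.filter (fun y : Fin K → Fin 2 => y k = 1), p (d, y))) +
            (∑ k : Fin K, ω k d 0) * (∑ y : Fin K → Fin 2, p (d, y)) := by
          intro d
          rw [Finset.sum_add_distrib, ← Finset.sum_mul]
          have : (∑ k : Fin K,
              (ω k d 1 - ω k d 0) *
                (∑ y ∈ Finset.univ.filter (fun y : Fin K → Fin 2 => y k = 1), p (d, y))) =
              (ω d d 1 - ω d d 0) *
                (∑ y ∈ Finset.univ.filter (fun y : Fin K → Fin 2 => y d = 1), p (d, y)) +
              (∑ k ∈ Finset.univ.filter (fun k : Fin K => k ≠ d),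
                (ω k d 1 - ω k d 0) *
                  (∑ y ∈ Finset.univ.filter (fun y : Fin K → Fin 2 => y k = 1), p (d, y))) := by
            rw [Finset.filter_ne', ← Finset.add_sum_erase _ _ (Finset.mem_univ d)]
          rw [this]; ring
        rw [← Finset.sum_add_distrib, ← Finset.sum_add_distrib]
        exact Finset.sum_congr rfl fun d _ => key d
end

section
/- (Proposition 1, part 1: existence.) Let K = 2 and let ℓ be an additive counterfactual loss with weights ω and intercept ϖ. Define the standard loss ℓs(d, m) = ω d d m − ω d (1−d) m. Then for every pmf p on (Fin 2) × (Fin 2 → Fin M), R(p; ℓ) − Rstd(p; ℓs) = Σ over m of ω 0 1 m · μ₀(m) + Σ over m of ω 1 0 m · μ₁(m) + Σ over potential-outcome vectors y of ϖ(y) · μ(y), where μ(y) = Σ over d of p(d, y) is the marginal of p on potential-outcome vectors and μₖ(m) = Σ over {y : y k = m} of μ(y). In particular, the risk difference depends only on μ and not on the evaluated decision D*. -/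
/-- Proposition 1, part 1: existence. With binary decisions (`K = 2`) and an
additive counterfactual loss `ℓ` with weights `ω` and intercept `ϖ`, defining the standard loss
`ℓs(d, m) = ω d d m − ω d (1−d) m`, for every pmf `p` on `(Fin 2) × (Fin 2 → Fin M)`:
`R(p; ℓ) − Rstd(p; ℓs) = Σ_m ω 0 1 m · μ₀(m) + Σ_m ω 1 0 m · μ₁(m) + Σ_y ϖ(y) · μ(y)`,
where `μ(y) = Σ_d p(d, y)` and `μₖ(m) = Σ_{y : y k = m} μ(y)`. In particular, the risk
difference depends only on the marginal `μ` and not on the evaluated decision. -/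
theorem stmt_6 (M : ℕ) (hM : 2 ≤ M)
    (ℓ : Fin 2 → (Fin 2 → Fin M) → ℝ)
    (ω : Fin 2 → Fin 2 → Fin M → ℝ)
    (ϖ : (Fin 2 → Fin M) → ℝ)
    (hadd : ∀ (d : Fin 2) (y : Fin 2 → Fin M), ℓ d y = (∑ k : Fin 2, ω k d (y k)) + ϖ y)
    (ℓs : Fin 2 → Fin M → ℝ)
    (hℓs : ∀ (d : Fin 2) (m : Fin M), ℓs d m = ω d d m - ω d (1 - d) m)
    (p : Fin 2 × (Fin 2 → Fin M) → ℝ)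
    (hnn : ∀ z, 0 ≤ p z)
    (hsum : ∑ z, p z = 1) :
    (∑ d : Fin 2, ∑ y : Fin 2 → Fin M, ℓ d y * p (d, y)) -
      (∑ d : Fin 2, ∑ y : Fin 2 → Fin M, ℓs d (y d) * p (d, y)) =
      (∑ m : Fin M,
          ω 0 1 m *
            (∑ y ∈ Finset.univ.filter (fun y : Fin 2 → Fin M => y 0 = m),
              ∑ d : Fin 2, p (d, y))) +
      (∑ m : Fin M,
          ω 1 0 m *
            (∑ y ∈ Finset.univ.filter (fun y : Fin 2 → Fin M => y 1 = m),
              ∑ d : Fin 2, p (d, y))) +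
      (∑ y : Fin 2 → Fin M, ϖ y * (∑ d : Fin 2, p (d, y))) := by
  have hfib : ∀ (k : Fin 2) (c : Fin M → ℝ),
      (∑ m : Fin M, c m *
        (∑ y ∈ Finset.univ.filter (fun y : Fin 2 → Fin M => y k = m),
          ∑ d : Fin 2, p (d, y)))
      = ∑ y : Fin 2 → Fin M, c (y k) * ∑ d : Fin 2, p (d, y) := by
    intro k c
    rw [← Finset.sum_fiberwise (g := fun y : Fin 2 → Fin M => y k)
      (f := fun y => c (y k) * ∑ d : Fin 2, p (d, y))]
    refine Finset.sum_congr rfl fun m _ => ?_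
    rw [Finset.mul_sum]
    refine Finset.sum_congr rfl fun y hy => ?_
    have : y k = m := (Finset.mem_filter.mp hy).2
    rw [this]
  rw [hfib 0 (ω 0 1), hfib 1 (ω 1 0)]
  simp only [hadd, hℓs, Fin.sum_univ_two, Finset.mul_sum]
  have hsplit : ∀ f g h : (Fin 2 → Fin M) → ℝ,
      (∑ x : Fin 2 → Fin M, f x) + (∑ x : Fin 2 → Fin M, g x) +
        (∑ x : Fin 2 → Fin M, h x) = ∑ x : Fin 2 → Fin M, (f x + g x + h x) := by
    intro f g h
    rw [Finset.sum_add_distrib, Finset.sum_add_distrib]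
  have hmerge : ∀ f g u v : (Fin 2 → Fin M) → ℝ,
      ((∑ x : Fin 2 → Fin M, f x) + (∑ x : Fin 2 → Fin M, g x)) -
        ((∑ x : Fin 2 → Fin M, u x) + (∑ x : Fin 2 → Fin M, v x)) =
        ∑ x : Fin 2 → Fin M, (f x + g x - (u x + v x)) := by
    intro f g u v
    rw [Finset.sum_sub_distrib, Finset.sum_add_distrib, Finset.sum_add_distrib]
  rw [hsplit, hmerge]
  apply Finset.sum_congr rfl
  intro x _
  have e1 : (1 - 0 : Fin 2) = 1 := rfl
  have e2 : (1 - 1 : Fin 2) = 0 := rfl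
  rw [e1, e2]
  ring
end

section
/- (Lemma: linearity of identifiable functionals on the simplex.) Let C be a real L × N matrix such that every vector v in the kernel of C has coordinate sum zero (1ᵀv = 0). Let ℓ ∈ ℝ^N and suppose that the linear functional p ↦ ℓᵀp, restricted to the probability simplex Δ_{N−1} = {p ∈ ℝ^N : Σᵢ pᵢ = 1, pᵢ ≥ 0}, depends only on Cp; that is, for all p, p' ∈ Δ_{N−1}, C p = C p' implies ℓᵀp = ℓᵀp'. Then ℓ lies in the image of Cᵀ: there exists w ∈ ℝ^L with ℓ = Cᵀ w, and hence ℓᵀ p = wᵀ (C p) for all p ∈ Δ_{N−1}. -/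
/-! A kernel vector `v` of `C` has coordinate sum zero, so its positive and negative parts have
the same mass and, once normalized, are two points of the simplex with the same image under `C`;
the hypothesis on `ℓ` then forces `ℓ ⬝ᵥ v = 0`. A functional vanishing on `ker C` lies in the
range of `Cᵀ`, since over a field the range of a dual map is the annihilator of the kernel. -/

open Matrix

section Simplex

variable {𝕜 ι : Type*} [Field 𝕜] [LinearOrder 𝕜] [IsStrictOrderedRing 𝕜] [Fintype ι]

lemma inv_sum_smul_mem_stdSimplex {f : ι → 𝕜} (hf : 0 ≤ f) (hsum : ∑ i, f i ≠ 0) :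
    (∑ i, f i)⁻¹ • f ∈ stdSimplex 𝕜 ι := by
  refine ⟨fun i ↦ smul_nonneg (inv_nonneg.2 (Finset.sum_nonneg fun j _ ↦ hf j)) (hf i), ?_⟩
  simp only [Pi.smul_apply, smul_eq_mul, ← Finset.mul_sum, inv_mul_cancel₀ hsum]

lemma exists_pos_smul_sub_mem_stdSimplex {v : ι → 𝕜} (hv : ∑ i, v i = 0) (hv₀ : v ≠ 0) :
    ∃ s : 𝕜, 0 < s ∧ ∃ p ∈ stdSimplex 𝕜 ι, ∃ q ∈ stdSimplex 𝕜 ι, v = s • (p - q) := by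
  set s := ∑ i, v⁺ i
  have hsum_neg : ∑ i, v⁻ i = s := by
    rw [eq_comm, ← sub_eq_zero, ← Finset.sum_sub_distrib, ← hv]
    exact Finset.sum_congr rfl fun i _ ↦ congrFun (posPart_sub_negPart v) i
  have hs : s ≠ 0 := by
    intro hs
    have hpos : v⁺ = 0 := funext fun i ↦
      (Finset.sum_eq_zero_iff_of_nonneg fun j _ ↦ posPart_nonneg (v j)).1 hs i (Finset.mem_univ i)
    have hneg : v⁻ = 0 := funext fun i ↦
      (Finset.sum_eq_zero_iff_of_nonneg fun j _ ↦ negPart_nonneg (v j)).1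
        (hsum_neg.trans hs) i (Finset.mem_univ i)
    exact hv₀ (by rw [← posPart_sub_negPart v, hpos, hneg, sub_zero])
  refine ⟨s, (Finset.sum_nonneg fun i _ ↦ posPart_nonneg (v i)).lt_of_ne' hs,
    s⁻¹ • v⁺, inv_sum_smul_mem_stdSimplex (posPart_nonneg v) hs,
    s⁻¹ • v⁻, hsum_neg ▸ inv_sum_smul_mem_stdSimplex (negPart_nonneg v) (hsum_neg ▸ hs), ?_⟩
  rw [← smul_sub, smul_inv_smul₀ hs, posPart_sub_negPart]

variable {m : Type*}

lemma dotProduct_eq_zero_of_mulVec_eq_zero {C : Matrix m ι 𝕜} {ℓ : ι → 𝕜}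
    (hker : ∀ v, C *ᵥ v = 0 → ∑ i, v i = 0)
    (hdep : ∀ p ∈ stdSimplex 𝕜 ι, ∀ q ∈ stdSimplex 𝕜 ι, C *ᵥ p = C *ᵥ q → ℓ ⬝ᵥ p = ℓ ⬝ᵥ q)
    {v : ι → 𝕜} (hv : C *ᵥ v = 0) : ℓ ⬝ᵥ v = 0 := by
  rcases eq_or_ne v 0 with rfl | hv₀
  · exact dotProduct_zero ℓ
  obtain ⟨s, hs, p, hp, q, hq, rfl⟩ := exists_pos_smul_sub_mem_stdSimplex (hker v hv) hv₀
  have hpq : C *ᵥ p = C *ᵥ q := by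
    rwa [mulVec_smul, mulVec_sub, smul_eq_zero_iff_right hs.ne', sub_eq_zero] at hv
  rw [dotProduct_smul, dotProduct_sub, hdep p hp q hq hpq, sub_self, smul_zero]

end Simplex

lemma Matrix.exists_eq_transpose_mulVec_of_ker_le {K m n : Type*} [Field K] [Fintype m]
    [Fintype n] [DecidableEq m] [DecidableEq n] (C : Matrix m n K) {ℓ : n → K}
    (h : ∀ v, C *ᵥ v = 0 → ℓ ⬝ᵥ v = 0) : ∃ w, ℓ = Cᵀ *ᵥ w := by
  have hann : dotProductEquiv K n ℓ ∈ (LinearMap.ker C.mulVecLin).dualAnnihilator :=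
    (Submodule.mem_dualAnnihilator _).2 fun v hv ↦ h v hv
  rw [← LinearMap.range_dualMap_eq_dualAnnihilator_ker] at hann
  obtain ⟨ψ, hψ⟩ := hann
  set w := (dotProductEquiv K m).symm ψ
  have hw : ψ = dotProductEquiv K m w := ((dotProductEquiv K m).apply_symm_apply ψ).symm
  refine ⟨w, (dotProductEquiv K n).injective ?_⟩
  rw [← hψ, hw]
  refine LinearMap.ext fun v ↦ ?_
  simp [dotProduct_mulVec, mulVec_transpose]

/-- Lemma: linearity of identifiable functionals on the simplex.
Let `C` be a real `L × N` matrix such that every vector in its kernel has coordinate sum zero.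
If the linear functional `p ↦ ℓᵀp`, restricted to the probability simplex, depends only on
`C p`, then `ℓ` lies in the image of `Cᵀ`: there is `w` with `ℓ = Cᵀ w`, and hence
`ℓᵀ p = wᵀ (C p)` on the simplex. -/
theorem stmt_14 (L N : ℕ)
    (C : Matrix (Fin L) (Fin N) ℝ)
    (hker : ∀ v : Fin N → ℝ, C.mulVec v = 0 → ∑ i, v i = 0)
    (ℓ : Fin N → ℝ)
    (hdep : ∀ p p' : Fin N → ℝ,
      (∀ i, 0 ≤ p i) → (∑ i, p i = 1) →
      (∀ i, 0 ≤ p' i) → (∑ i, p' i = 1) →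
      C.mulVec p = C.mulVec p' → ℓ ⬝ᵥ p = ℓ ⬝ᵥ p') :
    ∃ w : Fin L → ℝ,
      ℓ = C.transpose.mulVec w ∧
      ∀ p : Fin N → ℝ, (∀ i, 0 ≤ p i) → (∑ i, p i = 1) →
        ℓ ⬝ᵥ p = w ⬝ᵥ C.mulVec p := by
  obtain ⟨w, hw⟩ := C.exists_eq_transpose_mulVec_of_ker_le fun v hv ↦
    dotProduct_eq_zero_of_mulVec_eq_zero hker (fun p hp q hq ↦ hdep p q hp.1 hp.2 hq.1 hq.2) hv
  refine ⟨w, hw, fun p _ _ ↦ ?_⟩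
  rw [hw, mulVec_transpose, dotProduct_mulVec]
end

section
/- (Asymmetric counterfactual loss is additive iff Δ^R = Δ^H.) Fix real parameters ℓ^R_0, ℓ^R_1, ℓ^H_0, ℓ^H_1, ℓ_0, ℓ_1, c_0, c_1 and define, for d, y₀, y₁ ∈ {0, 1}, the loss ℓ(d; y₀, y₁) = (1−y₀)·y₁·ℓ^R_d + y₀·(1−y₁)·ℓ^H_{1−d} + y₀·y₁·ℓ_1 + (1−y₀)·(1−y₁)·ℓ_0 + c_d. Set Δ^R = ℓ^R_0 − ℓ^R_1 and Δ^H = ℓ^H_0 − ℓ^H_1. Then there exist functions ω₀, ω₁ : {0,1} × {0,1} → ℝ and ϖ : {0,1} × {0,1} → ℝ such that ℓ(d; y₀, y₁) = ω₀(d, y₀) + ω₁(d, y₁) + ϖ(y₀, y₁) for all d, y₀, y₁ if and only if Δ^R = Δ^H. -/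
/-- Asymmetric counterfactual loss is additive iff `Δ^R = Δ^H`. With binary
decision and outcomes, the asymmetric loss
`ℓ(d; y₀, y₁) = (1−y₀)·y₁·ℓ^R_d + y₀·(1−y₁)·ℓ^H_{1−d} + y₀·y₁·ℓ_1 + (1−y₀)·(1−y₁)·ℓ_0 + c_d`
admits an additive representation `ω₀(d, y₀) + ω₁(d, y₁) + ϖ(y₀, y₁)` if and only if
`Δ^R = ℓ^R_0 − ℓ^R_1` equals `Δ^H = ℓ^H_0 − ℓ^H_1`. -/
theorem stmt_15 (lR lH : Fin 2 → ℝ) (l0 l1 : ℝ) (c : Fin 2 → ℝ) :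
    (∃ ω₀ ω₁ ϖ : Fin 2 → Fin 2 → ℝ,
      ∀ d y₀ y₁ : Fin 2,
        (1 - ((y₀ : ℕ) : ℝ)) * ((y₁ : ℕ) : ℝ) * lR d +
            ((y₀ : ℕ) : ℝ) * (1 - ((y₁ : ℕ) : ℝ)) * lH (1 - d) +
            ((y₀ : ℕ) : ℝ) * ((y₁ : ℕ) : ℝ) * l1 +
            (1 - ((y₀ : ℕ) : ℝ)) * (1 - ((y₁ : ℕ) : ℝ)) * l0 +
            c d =
          ω₀ d y₀ + ω₁ d y₁ + ϖ y₀ y₁) ↔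
      lR 0 - lR 1 = lH 0 - lH 1 := by
  constructor
  · rintro ⟨ω₀, ω₁, ϖ, h⟩
    have h000 := h 0 0 0
    have h100 := h 1 0 0
    have h001 := h 0 0 1
    have h101 := h 1 0 1
    have h010 := h 0 1 0
    have h110 := h 1 1 0
    have h011 := h 0 1 1
    have h111 := h 1 1 1
    norm_num at h000 h100 h001 h101 h010 h110 h011 h111
    linarith
  · intro hΔ
    refine ⟨![![0, 0], ![0, lH 0 - lH 1]],
      ![![c 0, c 0], ![c 1, c 1 - (lR 0 - lR 1)]],
      ![![l0, lR 0], ![lH 1, l1]], ?_⟩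
    intro d y₀ y₁
    fin_cases d <;> fin_cases y₀ <;> fin_cases y₁ <;>
      norm_num [Fin.isValue] <;> linarith
end

section
/- (Trichotomous decision: when counterfactual risk favors a less invasive treatment.) Let decisions take values in {0, 1, 2} and outcomes be binary. Normalize ℓ_0 = 1 and ℓ_1 = 0, let c_0, c_1, c_2 ∈ ℝ and r_0, r_1 ≥ 0, and let μ be a pmf on potential-outcome vectors y : {0,1,2} → {0,1} with μ_j = Pr(Y(j) = 1). For a constant decision d, the standard risk is R(d; ℓStd) = (1 − μ_d) + c_d and the counterfactual risk is R(d; ℓCof) = (1 − μ_d) + c_d + Σ over j < d of r_j · μ_j. If k < d, μ_k > 0, and 0 < (μ_d − c_d) − (μ_k − c_k) < r_k · μ_k, then R(d; ℓStd) < R(k; ℓStd) while R(k; ℓCof) < R(d; ℓCof); that is, the standard risk prefers d but the counterfactual risk prefers the less invasive treatment k. -/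
/-- Marginal probability `μ_j = Pr(Y(j) = 1)` under the law `μ` of the potential-outcome
vector. -/
def mu1 (μ : (Fin 3 → Fin 2) → ℝ) (j : Fin 3) : ℝ :=
  ∑ y ∈ Finset.univ.filter (fun y : Fin 3 → Fin 2 => y j = 1), μ y

/-- Standard risk of the constant decision `d` (with `ℓ_0 = 1`, `ℓ_1 = 0`):
`E_μ[(1 − Y(d)) + c_d]`. -/
def riskStd (c : Fin 3 → ℝ) (μ : (Fin 3 → Fin 2) → ℝ) (d : Fin 3) : ℝ :=
  ∑ y : Fin 3 → Fin 2, ((1 - ((y d : ℕ) : ℝ)) + c d) * μ y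

/-- Counterfactual risk of the constant decision `d` (with `ℓ_0 = 1`, `ℓ_1 = 0`):
`E_μ[(1 − Y(d)) + c_d + Σ_{j < d} r_j · Y(j)]`. -/
def riskCof (c r : Fin 3 → ℝ) (μ : (Fin 3 → Fin 2) → ℝ) (d : Fin 3) : ℝ :=
  ∑ y : Fin 3 → Fin 2,
    ((1 - ((y d : ℕ) : ℝ)) + c d +
      ∑ j ∈ Finset.univ.filter (fun j : Fin 3 => j < d), r j * ((y j : ℕ) : ℝ)) * μ y

/-! Both risks are affine in the marginals `μ_j`, and the counterfactual risk is the standard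
risk plus the penalty `∑_{j < e} r_j μ_j`. Passing from `k` to `d > k` therefore raises the
counterfactual risk by the penalties `r_j μ_j` for `k ≤ j < d` minus the standard-risk gap, and
the term `r_k μ_k` alone already exceeds that gap. -/

lemma sum_mul_outcome_eq_mu1 (μ : (Fin 3 → Fin 2) → ℝ) (e : Fin 3) :
    ∑ y : Fin 3 → Fin 2, ((y e : ℕ) : ℝ) * μ y = mu1 μ e := by
  rw [mu1, Finset.sum_filter]
  refine Finset.sum_congr rfl fun y _ => ?_
  rcases Fin.exists_fin_two.mp ⟨y e, rfl⟩ with h | h <;> simp [h]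

lemma mu1_nonneg {μ : (Fin 3 → Fin 2) → ℝ} (hμ : ∀ y, 0 ≤ μ y) (e : Fin 3) :
    0 ≤ mu1 μ e :=
  Finset.sum_nonneg fun y _ => hμ y

lemma riskStd_eq {μ : (Fin 3 → Fin 2) → ℝ} (hμ : ∑ y, μ y = 1) (c : Fin 3 → ℝ) (e : Fin 3) :
    riskStd c μ e = (1 - mu1 μ e) + c e := by
  calc riskStd c μ e = (1 + c e) * ∑ y, μ y - ∑ y : Fin 3 → Fin 2, ((y e : ℕ) : ℝ) * μ y := by
        rw [riskStd, Finset.mul_sum, ← Finset.sum_sub_distrib]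
        exact Finset.sum_congr rfl fun y _ => by ring
    _ = (1 - mu1 μ e) + c e := by rw [hμ, sum_mul_outcome_eq_mu1]; ring

lemma riskCof_eq_riskStd_add (c r : Fin 3 → ℝ) (μ : (Fin 3 → Fin 2) → ℝ) (e : Fin 3) :
    riskCof c r μ e =
      riskStd c μ e + ∑ j ∈ Finset.univ.filter (fun j : Fin 3 => j < e), r j * mu1 μ j := by
  simp only [riskCof, riskStd, add_mul, Finset.sum_add_distrib, Finset.sum_mul]
  rw [Finset.sum_comm]
  congr 1
  refine Finset.sum_congr rfl fun j _ => ?_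
  simp only [mul_assoc, ← Finset.mul_sum, sum_mul_outcome_eq_mu1]

lemma sum_filter_lt_add_le_sum_filter_lt {ι M : Type*} [Fintype ι] [LinearOrder ι]
    [AddCommMonoid M] [PartialOrder M] [IsOrderedAddMonoid M] (f : ι → M) {k d : ι}
    (hkd : k < d) (hf : ∀ j, k < j → j < d → 0 ≤ f j) :
    ∑ j ∈ Finset.univ.filter (· < k), f j + f k ≤ ∑ j ∈ Finset.univ.filter (· < d), f j := by
  have hk : k ∉ Finset.univ.filter (· < k) := by simp
  rw [add_comm, ← Finset.sum_insert hk]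
  apply Finset.sum_le_sum_of_subset_of_nonneg
  · intro j hj
    simp only [Finset.mem_insert, Finset.mem_filter, Finset.mem_univ, true_and] at hj ⊢
    rcases hj with rfl | hj
    exacts [hkd, hj.trans hkd]
  · intro j hj hjk
    simp only [Finset.mem_insert, Finset.mem_filter, Finset.mem_univ, true_and, not_or,
      not_lt] at hj hjk
    exact hf j (lt_of_le_of_ne hjk.2 (Ne.symm hjk.1)) hj

theorem stmt_17_general (c r : Fin 3 → ℝ) (hr1 : 0 ≤ r 1)
    (μ : (Fin 3 → Fin 2) → ℝ)
    (hnn : ∀ y, 0 ≤ μ y)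
    (hsum : ∑ y, μ y = 1)
    (k d : Fin 3) (hkd : k < d)
    (hlow : 0 < (mu1 μ d - c d) - (mu1 μ k - c k))
    (hhigh : (mu1 μ d - c d) - (mu1 μ k - c k) < r k * mu1 μ k) :
    (∀ e : Fin 3, riskStd c μ e = (1 - mu1 μ e) + c e) ∧
    (∀ e : Fin 3, riskCof c r μ e =
      (1 - mu1 μ e) + c e +
        ∑ j ∈ Finset.univ.filter (fun j : Fin 3 => j < e), r j * mu1 μ j) ∧
    riskStd c μ d < riskStd c μ k ∧
    riskCof c r μ k < riskCof c r μ d := by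
  refine ⟨riskStd_eq hsum c, fun e => by rw [riskCof_eq_riskStd_add, riskStd_eq hsum], ?_, ?_⟩
  · rw [riskStd_eq hsum, riskStd_eq hsum]
    linarith
  · have hpenalty := sum_filter_lt_add_le_sum_filter_lt (fun j => r j * mu1 μ j) hkd
      fun j hkj hjd => by
        obtain rfl : j = 1 := by omega
        exact mul_nonneg hr1 (mu1_nonneg hnn 1)
    rw [riskCof_eq_riskStd_add, riskCof_eq_riskStd_add, riskStd_eq hsum, riskStd_eq hsum]
    linarith

/-- Trichotomous decision: when counterfactual risk favors a less invasive
treatment. With `ℓ_0 = 1`, `ℓ_1 = 0`, `r_0, r_1 ≥ 0`, for a pmf `μ` on potential-outcome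
vectors: the standard risk of a constant decision `d` is `(1 − μ_d) + c_d` and the
counterfactual risk is `(1 − μ_d) + c_d + Σ_{j < d} r_j μ_j`; moreover, if `k < d`, `μ_k > 0`,
and `0 < (μ_d − c_d) − (μ_k − c_k) < r_k · μ_k`, then the standard risk prefers `d` while the
counterfactual risk prefers the less invasive treatment `k`. -/
theorem stmt_17 (c r : Fin 3 → ℝ) (hr0 : 0 ≤ r 0) (hr1 : 0 ≤ r 1)
    (μ : (Fin 3 → Fin 2) → ℝ)
    (hnn : ∀ y, 0 ≤ μ y)
    (hsum : ∑ y, μ y = 1)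
    (k d : Fin 3) (hkd : k < d)
    (hμk : 0 < mu1 μ k)
    (hlow : 0 < (mu1 μ d - c d) - (mu1 μ k - c k))
    (hhigh : (mu1 μ d - c d) - (mu1 μ k - c k) < r k * mu1 μ k) :
    (∀ e : Fin 3, riskStd c μ e = (1 - mu1 μ e) + c e) ∧
    (∀ e : Fin 3, riskCof c r μ e =
      (1 - mu1 μ e) + c e +
        ∑ j ∈ Finset.univ.filter (fun j : Fin 3 => j < e), r j * mu1 μ j) ∧
    riskStd c μ d < riskStd c μ k ∧
    riskCof c r μ k < riskCof c r μ d :=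
  stmt_17_general c r hr1 μ hnn hsum k d hkd hlow hhigh
end

section
/- (Binary case: cross-column condition characterizes additive representation with intercept.) Let ℓ : {0,1} × {0,1} × {0,1} → ℝ assign a loss ℓ(d; y₀, y₁) to each decision d and pair of potential outcomes (y₀, y₁). Then there exist functions ω₀, ω₁ : {0,1} × {0,1} → ℝ and ϖ : {0,1} × {0,1} → ℝ with ℓ(d; y₀, y₁) = ω₀(d, y₀) + ω₁(d, y₁) + ϖ(y₀, y₁) for all d, y₀, y₁ if and only if [ℓ(1; 0, 0) − ℓ(0; 0, 0)] + [ℓ(1; 1, 1) − ℓ(0; 1, 1)] = [ℓ(1; 1, 0) − ℓ(0; 1, 0)] + [ℓ(1; 0, 1) − ℓ(0; 0, 1)]. -/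
/-- Binary case: cross-column condition characterizes additive representation
with intercept. A loss `ℓ(d; y₀, y₁)` on binary decisions and binary potential outcomes
admits an additive representation `ω₀(d, y₀) + ω₁(d, y₁) + ϖ(y₀, y₁)` if and only if
`[ℓ(1;0,0) − ℓ(0;0,0)] + [ℓ(1;1,1) − ℓ(0;1,1)] = [ℓ(1;1,0) − ℓ(0;1,0)] + [ℓ(1;0,1) − ℓ(0;0,1)]`. -/
theorem stmt_19 (ℓ : Fin 2 → Fin 2 → Fin 2 → ℝ) :
    (∃ ω₀ ω₁ ϖ : Fin 2 → Fin 2 → ℝ,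
      ∀ d y₀ y₁ : Fin 2, ℓ d y₀ y₁ = ω₀ d y₀ + ω₁ d y₁ + ϖ y₀ y₁) ↔
    (ℓ 1 0 0 - ℓ 0 0 0) + (ℓ 1 1 1 - ℓ 0 1 1) =
      (ℓ 1 1 0 - ℓ 0 1 0) + (ℓ 1 0 1 - ℓ 0 0 1) := by
  constructor
  · rintro ⟨ω₀, ω₁, ϖ, h⟩
    have h100 := h 1 0 0; have h000 := h 0 0 0
    have h111 := h 1 1 1; have h011 := h 0 1 1
    have h110 := h 1 1 0; have h010 := h 0 1 0
    have h101 := h 1 0 1; have h001 := h 0 0 1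
    linarith
  · intro hc
    refine ⟨fun d y₀ => if d = 0 then 0 else ℓ 1 y₀ 0 - ℓ 0 y₀ 0,
      fun d y₁ => if d = 0 then 0 else (ℓ 1 0 y₁ - ℓ 0 0 y₁) - (ℓ 1 0 0 - ℓ 0 0 0),
      fun y₀ y₁ => ℓ 0 y₀ y₁, ?_⟩
    intro d y₀ y₁
    fin_cases d <;> fin_cases y₀ <;> fin_cases y₁ <;> simp <;> linarith
end
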